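/- Let J ∈ ℝ and let h : ℝ → ℝ be a 2π-periodic function of class C³ with h(θ) > 0 for all θ, satisfying h(θ)²/2 + h(θ)³·(h'(θ) + h'''(θ)) = J for all θ ∈ ℝ. Then J · ∫₀^{2π} h(θ)⁻² dθ = π. -/

import Mathlib

/-!
Dividing the steady-state equation by `h²` gives `J h⁻² = 1/2 + h (h' + h''')`, and
`h (h' + h''')` is the derivative of `h²/2 + h h'' - h'²/2`. This first integral is periodic,
so its derivative integrates to zero over a period and only the constant `1/2` contributes.
-/

open Real

namespace Function.Periodic

variable {𝕜 F : Type*} [NontriviallyNormedField 𝕜] [NormedAddCommGroup F] [NormedSpace 𝕜 F]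
  {f : 𝕜 → F} {T : 𝕜}

protected theorem deriv (hf : Periodic f T) : Periodic (deriv f) T := fun x => by
  rw [← deriv_comp_add_const, funext hf]

protected theorem iteratedDeriv (hf : Periodic f T) (n : ℕ) : Periodic (iteratedDeriv n f) T := by
  induction n with
  | zero => simpa using hf
  | succ n ih => simpa only [iteratedDeriv_succ] using ih.deriv

end Function.Periodic

theorem Function.Periodic.intervalIntegral_eq_zero_of_hasDerivAt {F f : ℝ → ℝ} {T : ℝ}
    (hF : Function.Periodic F T) (hderiv : ∀ x, HasDerivAt F (f x) x) (a : ℝ)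
    (hint : IntervalIntegrable f MeasureTheory.volume a (a + T)) :
    ∫ x in a..a + T, f x = 0 := by
  rw [intervalIntegral.integral_eq_sub_of_hasDerivAt (fun x _ => hderiv x) hint, hF, sub_self]

noncomputable def thinFilmEnergy (h : ℝ → ℝ) (θ : ℝ) : ℝ :=
  h θ ^ 2 / 2 + h θ * iteratedDeriv 2 h θ - deriv h θ ^ 2 / 2

theorem hasDerivAt_thinFilmEnergy {h : ℝ → ℝ} (hh : ContDiff ℝ 3 h) (θ : ℝ) :
    HasDerivAt (thinFilmEnergy h) (h θ * (deriv h θ + iteratedDeriv 3 h θ)) θ := by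
  have hasDerivAt_iteratedDeriv (k : ℕ) (hk : k < 3) :
      HasDerivAt (iteratedDeriv k h) (iteratedDeriv (k + 1) h θ) θ := by
    rw [iteratedDeriv_succ]
    exact (hh.differentiable_iteratedDeriv k (by exact_mod_cast hk) θ).hasDerivAt
  have h0 := hasDerivAt_iteratedDeriv 0 (by norm_num)
  have h1 := hasDerivAt_iteratedDeriv 1 (by norm_num)
  have h2 := hasDerivAt_iteratedDeriv 2 (by norm_num)
  simp only [iteratedDeriv_zero, iteratedDeriv_one, zero_add, Nat.reduceAdd] at h0 h1 h2
  refine ((((h0.fun_pow 2).div_const 2).fun_add (h0.fun_mul h2)).fun_sub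
    ((h1.fun_pow 2).div_const 2)).congr_deriv ?_
  ring

theorem Function.Periodic.thinFilmEnergy {h : ℝ → ℝ} {T : ℝ} (hh : Function.Periodic h T) :
    Function.Periodic (thinFilmEnergy h) T := fun θ => by
  simp only [_root_.thinFilmEnergy, hh θ, hh.deriv θ, hh.iteratedDeriv 2 θ]

theorem stmt_1 (J : ℝ) (h : ℝ → ℝ) (hper : Function.Periodic h (2 * π))
    (hC3 : ContDiff ℝ 3 h) (hpos : ∀ θ, 0 < h θ)
    (heq : ∀ θ, (h θ) ^ 2 / 2 + (h θ) ^ 3 * (deriv h θ + iteratedDeriv 3 h θ) = J) :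
    J * ∫ θ in (0:ℝ)..(2 * π), ((h θ) ^ 2)⁻¹ = π := by
  let g : ℝ → ℝ := fun θ => h θ * (deriv h θ + iteratedDeriv 3 h θ)
  have hg : Continuous g := by
    have h0 := hC3.continuous_iteratedDeriv 1 (by norm_num)
    have h3 := hC3.continuous_iteratedDeriv 3 le_rfl
    rw [iteratedDeriv_one] at h0
    exact hC3.continuous.mul (h0.add h3)
  have divided (θ : ℝ) : J * (h θ ^ 2)⁻¹ = 1 / 2 + g θ := by
    have hne : h θ ≠ 0 := (hpos θ).ne'
    rw [← heq θ]
    field_simp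
    ring
  have hg_zero : ∫ θ in (0:ℝ)..(2 * π), g θ = 0 := by
    simpa using hper.thinFilmEnergy.intervalIntegral_eq_zero_of_hasDerivAt
      (hasDerivAt_thinFilmEnergy hC3) 0 (hg.intervalIntegrable _ _)
  rw [← intervalIntegral.integral_const_mul, intervalIntegral.integral_congr fun θ _ => divided θ,
    intervalIntegral.integral_add intervalIntegrable_const (hg.intervalIntegrable _ _), hg_zero]
  simp only [intervalIntegral.integral_const, smul_eq_mul]
  ring
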